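/- Fix a prime p and a natural number m, and for j ∈ ℕ write q_j := ⌊j / p^m⌋. In ℚ_p[X] set binom(X,k) := X(X−1)⋯(X−k+1)/k!. Then the ℤ_p-submodule of ℚ_p[X] spanned by the elements q_k!·binom(X,k) for k ∈ ℕ is a ℤ_p-subalgebra of ℚ_p[X]. -/

import Mathlib

/-!
Chu–Vandermonde applied to `X = i + (X - i)` gives the falling-factorial product formula
`(X)_i (X)_j = ∑_{a+b=j} C(j,a) (i)_a (X)_{i+b}`, hence
`ξ^⟨i⟩ ξ^⟨j⟩ = ∑_{a+b=j} C(i,a) ⟨i+b, b⟩ (q_j! / q_b!) ξ^⟨i+b⟩` with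
`⟨n+b, b⟩ = C(n+b,b) q_n! q_b! / q_{n+b}!`. Both `q_j! / q_b!` and `⟨n+b, b⟩` are `p`-adic
integers: Legendre's `v_p(n!) = v_p(⌊n/p⌋!) + ⌊n/p⌋` and `⌊x/p⌋ + ⌊y/p⌋ ≤ ⌊(x+y)/p⌋` show by
induction on `m` that
`v_p(q_{a+b}!) - v_p(q_a!) - v_p(q_b!) ≤ v_p((a+b)!) - v_p(a!) - v_p(b!) = v_p(C(a+b,b))`.
-/

open Polynomial Nat Finset

theorem descPochhammer_comp_eq_smeval {R : Type*} [CommRing R] (n : ℕ) (q : R[X]) :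
    (descPochhammer R n).comp q = (descPochhammer ℤ n).smeval q := by
  rw [← descPochhammer_map (algebraMap ℤ R), comp_eq_aeval, aeval_map_algebraMap,
    aeval_eq_smeval]

theorem descPochhammer_mul_descPochhammer {R : Type*} [CommRing R] (i j : ℕ) :
    descPochhammer R i * descPochhammer R j =
      ∑ ab ∈ antidiagonal j,
        ((j.choose ab.1 * i.descFactorial ab.1 : ℕ) : R[X]) * descPochhammer R (i + ab.2) := by
  have hj : descPochhammer R j = (descPochhammer ℤ j).smeval ((i : R[X]) + (X - (i : R[X]))) := by
    rw [add_sub_cancel, ← descPochhammer_comp_eq_smeval, comp_X]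
  rw [hj, Ring.descPochhammer_smeval_add _ (Commute.all _ _), mul_sum]
  refine sum_congr rfl fun ab _ => ?_
  rw [descPochhammer_smeval_eq_descFactorial, ← descPochhammer_comp_eq_smeval,
    ← descPochhammer_mul]
  push_cast
  ring

section Valuation

variable (p : ℕ) [Fact p.Prime]

theorem padicValNat_factorial_eq_div_add (n : ℕ) :
    padicValNat p n ! = padicValNat p (n / p)! + n / p := by
  conv_lhs => rw [← Nat.div_add_mod n p]
  rw [padicValNat_factorial_mul_add _ (Nat.mod_lt _ (Fact.out : p.Prime).pos),
    padicValNat_factorial_mul]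

theorem padicValNat_factorial_div_pow_add_le (a b m : ℕ) :
    padicValNat p ((a + b) / p ^ m)! + padicValNat p a ! + padicValNat p b ! ≤
      padicValNat p (a + b)! + padicValNat p (a / p ^ m)! + padicValNat p (b / p ^ m)! := by
  induction m with
  | zero => simp
  | succ m ih =>
    simp only [pow_succ, ← Nat.div_div_eq_div_mul] at ih ⊢
    have ha := padicValNat_factorial_eq_div_add p (a / p ^ m)
    have hb := padicValNat_factorial_eq_div_add p (b / p ^ m)
    have hab := padicValNat_factorial_eq_div_add p ((a + b) / p ^ m)
    have hsum : a / p ^ m / p + b / p ^ m / p ≤ (a + b) / p ^ m / p :=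
      Nat.div_add_div_le_add_div.trans
        (Nat.div_le_div_right Nat.div_add_div_le_add_div)
    omega

theorem padicValNat_factorial_div_pow_le (a b m : ℕ) :
    padicValNat p ((a + b) / p ^ m)! ≤
      padicValNat p ((a + b).choose b * (a / p ^ m)! * (b / p ^ m)!) := by
  have hchoose := Nat.add_choose_mul_factorial_mul_factorial a b
  have hne : (a + b).choose b ≠ 0 := (Nat.choose_pos (Nat.le_add_left b a)).ne'
  have := padicValNat_factorial_div_pow_add_le p a b m
  rw [← hchoose, padicValNat.mul (by positivity) (factorial_ne_zero b),
    padicValNat.mul hne (factorial_ne_zero a)] at this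
  rw [padicValNat.mul (by positivity) (factorial_ne_zero _),
    padicValNat.mul hne (factorial_ne_zero _)]
  omega

end Valuation

theorem Padic.norm_natCast_div_le_one {p : ℕ} [Fact p.Prime] {N D : ℕ} (hD : D ≠ 0)
    (h : padicValNat p D ≤ padicValNat p N) : ‖(N / D : ℚ_[p])‖ ≤ 1 := by
  rcases eq_or_ne N 0 with rfl | hN
  · simp
  rw [Padic.norm_le_one_iff_val_nonneg, div_eq_mul_inv,
    Padic.valuation_mul (by exact_mod_cast hN) (by simpa using hD), Padic.valuation_inv,
    Padic.valuation_natCast, Padic.valuation_natCast]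
  omega


section LevelBinomial

variable {p : ℕ} [Fact p.Prime] {m : ℕ}

variable (p m) in
/-- `ξ^⟨k⟩ = q_k! binom(X, k)`, where `q_k = ⌊k / p^m⌋`. -/
noncomputable def levelBinomial (k : ℕ) : ℚ_[p][X] :=
  (((k / p ^ m)! : ℚ_[p]) / (k ! : ℚ_[p])) • descPochhammer ℚ_[p] k

variable (p m) in
noncomputable def levelStructureConstant (i a b : ℕ) : ℚ_[p] :=
  i.choose a *
    (((i + b).choose b * (i / p ^ m)! * (b / p ^ m)! : ℕ) / ((i + b) / p ^ m)! : ℚ_[p]) *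
    (((a + b) / p ^ m)! / (b / p ^ m)! : ℚ_[p])

theorem levelBinomial_mul (i j : ℕ) :
    levelBinomial p m i * levelBinomial p m j =
      ∑ ab ∈ antidiagonal j,
        levelStructureConstant p m i ab.1 ab.2 • levelBinomial p m (i + ab.2) := by
  rw [levelBinomial, levelBinomial, smul_mul_smul_comm, descPochhammer_mul_descPochhammer, smul_sum]
  refine sum_congr rfl fun ⟨a, b⟩ hab => ?_
  rw [HasAntidiagonal.mem_antidiagonal] at hab
  subst hab
  rw [levelBinomial, smul_smul, ← C_eq_natCast, ← smul_eq_C_mul, smul_smul]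
  congr 1
  have hj : ((a + b).choose a * a ! * b ! : ℚ_[p]) = (a + b)! := by
    rw [Nat.choose_symm_add]; exact_mod_cast Nat.add_choose_mul_factorial_mul_factorial a b
  have hib : ((i + b).choose b * i ! * b ! : ℚ_[p]) = (i + b)! := by
    exact_mod_cast Nat.add_choose_mul_factorial_mul_factorial i b
  rw [levelStructureConstant, ← hj, ← hib, Nat.descFactorial_eq_factorial_mul_choose]
  have hc₁ : ((a + b).choose a : ℚ_[p]) ≠ 0 :=
    Nat.cast_ne_zero.mpr (Nat.choose_pos (Nat.le_add_right a b)).ne'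
  have hc₂ : ((i + b).choose b : ℚ_[p]) ≠ 0 :=
    Nat.cast_ne_zero.mpr (Nat.choose_pos (Nat.le_add_left b i)).ne'
  push_cast
  field_simp [Nat.factorial_ne_zero]

theorem norm_levelStructureConstant_le_one (i a b : ℕ) :
    ‖levelStructureConstant p m i a b‖ ≤ 1 := by
  have hdvd : (b / p ^ m)! ∣ ((a + b) / p ^ m)! :=
    Nat.factorial_dvd_factorial (Nat.div_le_div_right (Nat.le_add_left b a))
  rw [levelStructureConstant, norm_mul, norm_mul]
  refine mul_le_one₀ (mul_le_one₀ (IsUltrametricDist.norm_natCast_le_one _ _)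
    (norm_nonneg _) ?_) (norm_nonneg _) ?_
  · exact Padic.norm_natCast_div_le_one (factorial_ne_zero _)
      (padicValNat_factorial_div_pow_le p i b m)
  · exact Padic.norm_natCast_div_le_one (factorial_ne_zero _)
      ((padicValNat_dvd_iff_le (factorial_ne_zero _)).mp (pow_padicValNat_dvd.trans hdvd))

end LevelBinomial

theorem PadicInt.smul_mem_span_of_norm_le_one {p : ℕ} [Fact p.Prime] {V : Type*}
    [AddCommGroup V] [Module ℚ_[p] V] [Module ℤ_[p] V] [IsScalarTower ℤ_[p] ℚ_[p] V]
    {S : Set V} {c : ℚ_[p]} (hc : ‖c‖ ≤ 1) {v : V} (hv : v ∈ Submodule.span ℤ_[p] S) :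
    c • v ∈ Submodule.span ℤ_[p] S := by
  let z : ℤ_[p] := ⟨c, hc⟩
  have hcv : c • v = z • v := algebraMap_smul ℚ_[p] z v
  exact hcv ▸ Submodule.smul_mem _ _ hv

section LevelLattice

variable {p : ℕ} [Fact p.Prime] (m : ℕ)

theorem one_mem_span_levelBinomial :
    (1 : ℚ_[p][X]) ∈ Submodule.span ℤ_[p] (Set.range (levelBinomial p m)) :=
  Submodule.subset_span ⟨0, by simp [levelBinomial]⟩

theorem levelBinomial_mul_mem_span (i j : ℕ) :
    levelBinomial p m i * levelBinomial p m j ∈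
      Submodule.span ℤ_[p] (Set.range (levelBinomial p m)) := by
  rw [levelBinomial_mul]
  exact Submodule.sum_mem _ fun ab _ => PadicInt.smul_mem_span_of_norm_le_one
    (norm_levelStructureConstant_le_one i ab.1 ab.2) (Submodule.subset_span ⟨_, rfl⟩)

theorem mul_mem_span_levelBinomial {x y : ℚ_[p][X]}
    (hx : x ∈ Submodule.span ℤ_[p] (Set.range (levelBinomial p m)))
    (hy : y ∈ Submodule.span ℤ_[p] (Set.range (levelBinomial p m))) :
    x * y ∈ Submodule.span ℤ_[p] (Set.range (levelBinomial p m)) := by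
  have hxy := Submodule.mul_mem_mul hx hy
  rw [Submodule.span_mul_span] at hxy
  refine Submodule.span_le.mpr ?_ hxy
  rintro _ ⟨_, ⟨i, rfl⟩, _, ⟨j, rfl⟩, rfl⟩
  exact levelBinomial_mul_mem_span m i j

end LevelLattice

/-- The `ℤ_p`-lattice `D^(m)(𝔾_m)` spanned inside `ℚ_p[X]` by the elements
`ξ^⟨k⟩ = q_k!·binom(X,k) = (q_k!/k!)·X(X−1)⋯(X−k+1)` (with `q_k = k / p^m`)
is a `ℤ_p`-subalgebra: it contains `1` and is closed under multiplication. -/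
theorem stmt_6 (p : ℕ) [Fact p.Prime] (m : ℕ) :
    (1 : Polynomial ℚ_[p]) ∈
        Submodule.span ℤ_[p]
          (Set.range fun k : ℕ =>
            ((Nat.factorial (k / p ^ m) : ℚ_[p]) / (Nat.factorial k : ℚ_[p])) •
              descPochhammer ℚ_[p] k) ∧
    ∀ x y : Polynomial ℚ_[p],
      x ∈ Submodule.span ℤ_[p]
            (Set.range fun k : ℕ =>
              ((Nat.factorial (k / p ^ m) : ℚ_[p]) / (Nat.factorial k : ℚ_[p])) •
                descPochhammer ℚ_[p] k) →
      y ∈ Submodule.span ℤ_[p]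
            (Set.range fun k : ℕ =>
              ((Nat.factorial (k / p ^ m) : ℚ_[p]) / (Nat.factorial k : ℚ_[p])) •
                descPochhammer ℚ_[p] k) →
      x * y ∈ Submodule.span ℤ_[p]
            (Set.range fun k : ℕ =>
              ((Nat.factorial (k / p ^ m) : ℚ_[p]) / (Nat.factorial k : ℚ_[p])) •
                descPochhammer ℚ_[p] k) :=
  ⟨one_mem_span_levelBinomial m, fun _ _ => mul_mem_span_levelBinomial m⟩
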